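/- Suppose there exist C > 0 and 0 < a < 1 such that ψ(φ⁻¹(T))/ψ(φ⁻¹(t)) ≤ C (T/t)^{a} for all 0 < t ≤ T, where φ, ψ are scale functions. Then the Bernstein function φ̄(λ) := ∫₀^∞ (1 - e^{-λt})/(t ψ(φ⁻¹(t))) dt satisfies φ̄(φ(r)⁻¹) ≃ 1/ψ(r) for all r > 0. -/

import Mathlib

open Real Set MeasureTheory Metric

/-- A scale function satisfying `LU(α₁, α₂)`. -/
def LU (α₁ α₂ : ℝ) (ψ : ℝ → ℝ) : Prop :=
  ContinuousOn ψ (Ici 0) ∧ StrictMonoOn ψ (Ici 0) ∧ ψ 0 = 0 ∧ ψ 1 = 1 ∧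
    ∃ C : ℝ, 1 ≤ C ∧ ∀ r R : ℝ, 0 < r → r ≤ R →
      C⁻¹ * (R / r) ^ α₁ ≤ ψ R / ψ r ∧ ψ R / ψ r ≤ C * (R / r) ^ α₂

/-!
Substituting `t = R u` turns the integral into `∫₀^∞ (1 - e^{-u}) / (u g(R u)) du` with
`g = ψ ∘ φ⁻¹`. The ratio `g(R u) / g(R)` is at least `C₀⁻¹ u^a` for `u ≤ 1` (the growth hypothesis)
and at least `c u^ε` for `u ≥ 1`, with `ε = γ₁ / β₂` coming from the upper LU bound of `φ` and the
lower one of `ψ`. Since `1 - e^{-u} ≤ min(u, 1)`, the integral is at most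
`(C₀ / (1 - a) + 1 / (c ε)) / g(R)`, and `a < 1`, `ε > 0` make both pieces finite. Conversely the
piece over `[1, 2]` alone is at least `(1 - e^{-1}) / (2 g(2R))`, and `g(2R) ≤ C₀ 2^a g(R)`.
-/

noncomputable def bernsteinIntegrand (h : ℝ → ℝ) (u : ℝ) : ℝ := (1 - exp (-u)) / (u * h u)

section UnitScale

variable {h : ℝ → ℝ} {a ε C₀ c : ℝ}

lemma bernsteinIntegrand_nonneg (hpos : ∀ t, 0 < t → 0 < h t) {u : ℝ} (hu : 0 < u) :
    0 ≤ bernsteinIntegrand h u :=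
  div_nonneg (sub_nonneg.2 (exp_le_one_iff.2 (neg_nonpos.2 hu.le)))
    (mul_pos hu (hpos u hu)).le

lemma bernsteinIntegrand_le_inv (hpos : ∀ t, 0 < t → 0 < h t) {u : ℝ} (hu : 0 < u) :
    bernsteinIntegrand h u ≤ (h u)⁻¹ := by
  have hhu := hpos u hu
  calc bernsteinIntegrand h u ≤ u / (u * h u) := by
        unfold bernsteinIntegrand
        gcongr
        linarith [add_one_le_exp (-u)]
    _ = (h u)⁻¹ := by field_simp

lemma bernsteinIntegrand_le_inv_mul (hpos : ∀ t, 0 < t → 0 < h t) {u : ℝ} (hu : 0 < u) :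
    bernsteinIntegrand h u ≤ (u * h u)⁻¹ := by
  have hhu := hpos u hu
  rw [bernsteinIntegrand, div_eq_mul_inv]
  exact mul_le_of_le_one_left (by positivity) (by linarith [exp_pos (-u)])

lemma bernsteinIntegrand_le_rpow_of_le_one (hpos : ∀ t, 0 < t → 0 < h t)
    (hup : ∀ t T, 0 < t → t ≤ T → h T / h t ≤ C₀ * (T / t) ^ a) {u : ℝ} (hu : u ∈ Ioc 0 1) :
    bernsteinIntegrand h u ≤ C₀ / h 1 * u ^ (-a) := by
  have hh1 := hpos 1 one_pos
  have hhu := hpos u hu.1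
  calc bernsteinIntegrand h u ≤ (h u)⁻¹ := bernsteinIntegrand_le_inv hpos hu.1
    _ = h 1 / h u / h 1 := by field_simp
    _ ≤ C₀ * (1 / u) ^ a / h 1 := by gcongr; exact hup u 1 hu.1 hu.2
    _ = C₀ / h 1 * u ^ (-a) := by
      rw [one_div, inv_rpow hu.1.le, rpow_neg hu.1.le]; ring

lemma bernsteinIntegrand_le_rpow_of_one_lt (hpos : ∀ t, 0 < t → 0 < h t) (hc : 0 < c)
    (hlow : ∀ t T, 0 < t → t ≤ T → c * (T / t) ^ ε ≤ h T / h t) {u : ℝ} (hu : u ∈ Ioi 1) :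
    bernsteinIntegrand h u ≤ (c * h 1)⁻¹ * u ^ (-1 - ε) := by
  have hu0 : (0 : ℝ) < u := one_pos.trans hu
  have hh1 := hpos 1 one_pos
  have hhu := hpos u hu0
  have hgrow : c * h 1 * u ^ ε ≤ h u := by
    have := hlow 1 u one_pos (le_of_lt hu)
    rw [div_one, le_div_iff₀ hh1] at this
    linarith
  calc bernsteinIntegrand h u ≤ (u * h u)⁻¹ := bernsteinIntegrand_le_inv_mul hpos hu0
    _ ≤ (u * (c * h 1 * u ^ ε))⁻¹ := by gcongr
    _ = (c * h 1)⁻¹ * u ^ (-1 - ε) := by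
      rw [rpow_sub hu0, rpow_neg hu0.le, rpow_one]; field_simp

lemma le_bernsteinIntegrand (hmono : MonotoneOn h (Ioi 0)) (hpos : ∀ t, 0 < t → 0 < h t)
    {u : ℝ} (hu : u ∈ Ioc 1 2) :
    (1 - exp (-1)) / (2 * h 2) ≤ bernsteinIntegrand h u := by
  have hu0 : (0 : ℝ) < u := one_pos.trans hu.1
  have hhu := hpos u hu0
  apply div_le_div₀ (sub_nonneg.2 (exp_le_one_iff.2 (by linarith))) (by gcongr; exact hu.1.le)
    (by positivity)
  exact mul_le_mul hu.2 (hmono hu0 (mem_Ioi.2 two_pos) hu.2) hhu.le zero_le_two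

lemma aestronglyMeasurable_bernsteinIntegrand (hmono : MonotoneOn h (Ioi 0)) {s : Set ℝ}
    (hs : MeasurableSet s) (hs0 : s ⊆ Ioi 0) :
    AEStronglyMeasurable (bernsteinIntegrand h) (volume.restrict s) :=
  ((by fun_prop : Measurable fun u : ℝ => 1 - exp (-u)).aemeasurable.div
    (aemeasurable_id.mul (aemeasurable_restrict_of_monotoneOn hs (hmono.mono hs0))))
    |>.aestronglyMeasurable

lemma integral_Ioc_zero_one_rpow (ha : a < 1) :
    ∫ u in Ioc (0 : ℝ) 1, u ^ (-a) = (1 - a)⁻¹ := by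
  rw [← intervalIntegral.integral_of_le zero_le_one, integral_rpow (Or.inl (by linarith)),
    zero_rpow (by linarith), one_rpow]
  ring

lemma integrableOn_Ioc_bernsteinIntegrand_and_setIntegral_le (hmono : MonotoneOn h (Ioi 0))
    (hpos : ∀ t, 0 < t → 0 < h t) (hup : ∀ t T, 0 < t → t ≤ T → h T / h t ≤ C₀ * (T / t) ^ a)
    (ha : a < 1) :
    IntegrableOn (bernsteinIntegrand h) (Ioc 0 1) ∧
      ∫ u in Ioc (0 : ℝ) 1, bernsteinIntegrand h u ≤ C₀ / h 1 / (1 - a) := by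
  have hrpow : IntegrableOn (fun u : ℝ => C₀ / h 1 * u ^ (-a)) (Ioc 0 1) := by
    refine Integrable.const_mul ?_ _
    exact (intervalIntegrable_iff_integrableOn_Ioc_of_le zero_le_one).1
      (intervalIntegral.intervalIntegrable_rpow' (by linarith))
  have hint : IntegrableOn (bernsteinIntegrand h) (Ioc 0 1) := by
    refine hrpow.mono' (aestronglyMeasurable_bernsteinIntegrand hmono measurableSet_Ioc
      Ioc_subset_Ioi_self) ?_
    filter_upwards [ae_restrict_mem measurableSet_Ioc] with u hu
    rw [Real.norm_of_nonneg (bernsteinIntegrand_nonneg hpos hu.1)]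
    exact bernsteinIntegrand_le_rpow_of_le_one hpos hup hu
  refine ⟨hint, ?_⟩
  calc ∫ u in Ioc (0 : ℝ) 1, bernsteinIntegrand h u ≤ ∫ u in Ioc (0 : ℝ) 1, C₀ / h 1 * u ^ (-a) :=
        setIntegral_mono_on hint hrpow measurableSet_Ioc
          fun u hu => bernsteinIntegrand_le_rpow_of_le_one hpos hup hu
    _ = C₀ / h 1 / (1 - a) := by
      rw [integral_const_mul, integral_Ioc_zero_one_rpow ha, div_eq_mul_inv _ (1 - a)]

lemma integrableOn_Ioi_one_bernsteinIntegrand_and_setIntegral_le (hmono : MonotoneOn h (Ioi 0))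
    (hpos : ∀ t, 0 < t → 0 < h t) (hc : 0 < c) (hε : 0 < ε)
    (hlow : ∀ t T, 0 < t → t ≤ T → c * (T / t) ^ ε ≤ h T / h t) :
    IntegrableOn (bernsteinIntegrand h) (Ioi 1) ∧
      ∫ u in Ioi (1 : ℝ), bernsteinIntegrand h u ≤ (c * h 1)⁻¹ / ε := by
  have hrpow : IntegrableOn (fun u : ℝ => (c * h 1)⁻¹ * u ^ (-1 - ε)) (Ioi 1) :=
    (integrableOn_Ioi_rpow_of_lt (by linarith) one_pos).const_mul _
  have hint : IntegrableOn (bernsteinIntegrand h) (Ioi 1) := by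
    refine hrpow.mono' (aestronglyMeasurable_bernsteinIntegrand hmono measurableSet_Ioi
      (Ioi_subset_Ioi zero_le_one)) ?_
    filter_upwards [ae_restrict_mem measurableSet_Ioi] with u hu
    rw [Real.norm_of_nonneg (bernsteinIntegrand_nonneg hpos (one_pos.trans hu))]
    exact bernsteinIntegrand_le_rpow_of_one_lt hpos hc hlow hu
  refine ⟨hint, ?_⟩
  calc ∫ u in Ioi (1 : ℝ), bernsteinIntegrand h u
      ≤ ∫ u in Ioi (1 : ℝ), (c * h 1)⁻¹ * u ^ (-1 - ε) :=
        setIntegral_mono_on hint hrpow measurableSet_Ioi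
          fun u hu => bernsteinIntegrand_le_rpow_of_one_lt hpos hc hlow hu
    _ = (c * h 1)⁻¹ / ε := by
      rw [integral_const_mul, integral_Ioi_rpow_of_lt (by linarith) one_pos, one_rpow,
        show -1 - ε + 1 = -ε by ring, neg_div_neg_eq, mul_one_div]

theorem integral_bernsteinIntegrand_bounds (hmono : MonotoneOn h (Ioi 0))
    (hpos : ∀ t, 0 < t → 0 < h t) (hup : ∀ t T, 0 < t → t ≤ T → h T / h t ≤ C₀ * (T / t) ^ a)
    (ha : a < 1) (hlow : ∀ t T, 0 < t → t ≤ T → c * (T / t) ^ ε ≤ h T / h t) (hc : 0 < c)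
    (hε : 0 < ε) :
    (1 - exp (-1)) / (2 * h 2) ≤ ∫ u in Ioi (0 : ℝ), bernsteinIntegrand h u ∧
      ∫ u in Ioi (0 : ℝ), bernsteinIntegrand h u ≤ (C₀ / (1 - a) + (c * ε)⁻¹) / h 1 := by
  obtain ⟨hint₁, hle₁⟩ := integrableOn_Ioc_bernsteinIntegrand_and_setIntegral_le hmono hpos hup ha
  obtain ⟨hint₂, hle₂⟩ :=
    integrableOn_Ioi_one_bernsteinIntegrand_and_setIntegral_le hmono hpos hc hε hlow
  have hint : IntegrableOn (bernsteinIntegrand h) (Ioi 0) := by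
    rw [← Ioc_union_Ioi_eq_Ioi zero_le_one]
    exact hint₁.union hint₂
  constructor
  · calc (1 - exp (-1)) / (2 * h 2) = ∫ _ in Ioc (1 : ℝ) 2, (1 - exp (-1)) / (2 * h 2) := by
          norm_num
      _ ≤ ∫ u in Ioc (1 : ℝ) 2, bernsteinIntegrand h u :=
          setIntegral_mono_on (integrableOn_const measure_Ioc_lt_top.ne)
            (hint₂.mono_set Ioc_subset_Ioi_self) measurableSet_Ioc
            fun u hu => le_bernsteinIntegrand hmono hpos hu
      _ ≤ ∫ u in Ioi (0 : ℝ), bernsteinIntegrand h u :=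
          setIntegral_mono_set hint
            ((ae_restrict_mem measurableSet_Ioi).mono fun u hu => bernsteinIntegrand_nonneg hpos hu)
            (LE.le.eventuallyLE fun u hu => one_pos.trans hu.1)
  · rw [← Ioc_union_Ioi_eq_Ioi zero_le_one,
      setIntegral_union (Ioc_disjoint_Ioi le_rfl) measurableSet_Ioi hint₁ hint₂]
    calc _ ≤ C₀ / h 1 / (1 - a) + (c * h 1)⁻¹ / ε := add_le_add hle₁ hle₂
      _ = (C₀ / (1 - a) + (c * ε)⁻¹) / h 1 := by ring

end UnitScale

lemma integral_one_sub_exp_div_eq_integral_bernsteinIntegrand (g : ℝ → ℝ) {R : ℝ} (hR : 0 < R) :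
    ∫ t in Ioi (0 : ℝ), (1 - exp (-R⁻¹ * t)) / (t * g t) =
      ∫ u in Ioi (0 : ℝ), bernsteinIntegrand (fun u => g (R * u)) u := by
  have := integral_comp_mul_left_Ioi' (fun t => (1 - exp (-R⁻¹ * t)) / (t * g t)) 0 hR
  rw [mul_zero] at this
  rw [← this, smul_eq_mul, ← integral_const_mul]
  refine setIntegral_congr_fun measurableSet_Ioi fun u _ => ?_
  rw [bernsteinIntegrand, neg_mul, inv_mul_cancel_left₀ hR.ne', mul_assoc, mul_div_assoc',
    mul_div_mul_left _ _ hR.ne']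

lemma ratio_bound_comp_mul {g : ℝ → ℝ} (P : ℝ → ℝ → Prop)
    (hP : ∀ t T, 0 < t → t ≤ T → P (T / t) (g T / g t)) {R : ℝ} (hR : 0 < R) :
    ∀ t T, 0 < t → t ≤ T → P (T / t) (g (R * T) / g (R * t)) := fun t T ht htT => by
  simpa only [mul_div_mul_left _ _ hR.ne'] using
    hP (R * t) (R * T) (mul_pos hR ht) (mul_le_mul_of_nonneg_left htT hR.le)

theorem exists_comparable_integral_one_sub_exp_div {g : ℝ → ℝ} {a ε C₀ c : ℝ}
    (hmono : MonotoneOn g (Ioi 0)) (hpos : ∀ t, 0 < t → 0 < g t)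
    (hup : ∀ t T, 0 < t → t ≤ T → g T / g t ≤ C₀ * (T / t) ^ a) (ha : a < 1)
    (hlow : ∀ t T, 0 < t → t ≤ T → c * (T / t) ^ ε ≤ g T / g t) (hc : 0 < c) (hε : 0 < ε) :
    ∃ C, 1 ≤ C ∧ ∀ R, 0 < R →
      C⁻¹ / g R ≤ ∫ t in Ioi (0 : ℝ), (1 - exp (-R⁻¹ * t)) / (t * g t) ∧
      ∫ t in Ioi (0 : ℝ), (1 - exp (-R⁻¹ * t)) / (t * g t) ≤ C / g R := by
  have hC₀ : 0 < C₀ := by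
    have := hup 1 1 one_pos le_rfl
    rw [div_self (hpos 1 one_pos).ne', div_one, one_rpow, mul_one] at this
    linarith
  set A := (1 - exp (-1)) / (2 * (C₀ * 2 ^ a))
  set B := C₀ / (1 - a) + (c * ε)⁻¹
  have hexp : 0 < 1 - exp (-1) := sub_pos.2 (exp_lt_one_iff.2 (by norm_num))
  have hA : 0 < A := by positivity
  refine ⟨max (max A⁻¹ B) 1, le_max_right _ _, fun R hR => ?_⟩
  have hgR := hpos R hR
  have hdoubling : g (R * 2) ≤ C₀ * 2 ^ a * g R := by
    have := hup R (R * 2) hR (by linarith)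
    rwa [mul_div_cancel_left₀ _ hR.ne', div_le_iff₀ hgR] at this
  obtain ⟨hlower, hupper⟩ := integral_bernsteinIntegrand_bounds (h := fun u => g (R * u))
    (fun x hx y hy hxy => hmono (mul_pos hR hx) (mul_pos hR hy) (by gcongr))
    (fun t ht => hpos _ (mul_pos hR ht))
    (ratio_bound_comp_mul (fun x y => y ≤ C₀ * x ^ a) hup hR) ha
    (ratio_bound_comp_mul (fun x y => c * x ^ ε ≤ y) hlow hR) hc hε
  rw [mul_one] at hupper
  rw [integral_one_sub_exp_div_eq_integral_bernsteinIntegrand g hR]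
  constructor
  · calc (max (max A⁻¹ B) 1)⁻¹ / g R ≤ A / g R := by
          gcongr
          exact inv_le_of_inv_le₀ hA (le_max_of_le_left (le_max_left _ _))
      _ ≤ (1 - exp (-1)) / (2 * g (R * 2)) := by
          rw [div_div, mul_assoc]
          gcongr
          exact mul_pos two_pos (hpos _ (by positivity))
      _ ≤ _ := hlower
  · exact hupper.trans (by gcongr; exact le_max_of_le_left (le_max_right _ _))

namespace LU

variable {α₁ α₂ : ℝ} {φ φinv : ℝ → ℝ}

lemma pos (hφ : LU α₁ α₂ φ) {r : ℝ} (hr : 0 < r) : 0 < φ r := by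
  simpa only [hφ.2.2.1] using hφ.2.1 self_mem_Ici (mem_Ici.2 hr.le) hr

open Filter in
lemma tendsto_atTop (hα₁ : 0 < α₁) (hφ : LU α₁ α₂ φ) : Tendsto φ atTop atTop := by
  obtain ⟨-, -, -, h1, C, hC, hbound⟩ := hφ
  refine tendsto_atTop_mono' _ ?_
    ((tendsto_rpow_atTop hα₁).const_mul_atTop (inv_pos.2 (one_pos.trans_le hC)))
  filter_upwards [eventually_ge_atTop 1] with R hR
  simpa only [h1, div_one] using (hbound 1 R one_pos hR).1

lemma invFun_nonneg (hα₁ : 0 < α₁) (hφ : LU α₁ α₂ φ) (hinv₁ : ∀ r, 0 ≤ r → φinv (φ r) = r)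
    {t : ℝ} (ht : 0 ≤ t) : 0 ≤ φinv t := by
  have hsurj := intermediate_value_Ici hφ.1 (hφ.tendsto_atTop hα₁)
  rw [hφ.2.2.1] at hsurj
  obtain ⟨s, hs, rfl⟩ := hsurj ht
  rwa [hinv₁ s hs]

lemma invFun_pos (hα₁ : 0 < α₁) (hφ : LU α₁ α₂ φ) (hinv₁ : ∀ r, 0 ≤ r → φinv (φ r) = r)
    (hinv₂ : ∀ t, 0 ≤ t → φ (φinv t) = t) {t : ℝ} (ht : 0 < t) : 0 < φinv t := by
  refine (hφ.invFun_nonneg hα₁ hinv₁ ht.le).lt_of_ne fun h => ht.ne ?_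
  rw [← hinv₂ t ht.le, ← h, hφ.2.2.1]

lemma monotoneOn_invFun (hα₁ : 0 < α₁) (hφ : LU α₁ α₂ φ) (hinv₁ : ∀ r, 0 ≤ r → φinv (φ r) = r)
    (hinv₂ : ∀ t, 0 ≤ t → φ (φinv t) = t) : MonotoneOn φinv (Ici 0) := fun s hs t ht hst =>
  (hφ.2.1.le_iff_le (hφ.invFun_nonneg hα₁ hinv₁ hs) (hφ.invFun_nonneg hα₁ hinv₁ ht)).1
    (by rwa [hinv₂ s hs, hinv₂ t ht])

end LU

theorem exists_mul_div_rpow_le_div {β₁ β₂ γ₁ γ₂ : ℝ} {φ ψ : ℝ → ℝ} (hβ₂ : 0 < β₂) (hγ₁ : 0 ≤ γ₁)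
    (hφ : LU β₁ β₂ φ) (hψ : LU γ₁ γ₂ ψ) :
    ∃ c > 0, ∀ s S, 0 < s → s ≤ S → c * (φ S / φ s) ^ (γ₁ / β₂) ≤ ψ S / ψ s := by
  obtain ⟨-, -, -, -, Cφ, hCφ, hφb⟩ := hφ
  obtain ⟨-, -, -, -, Cψ, hCψ, hψb⟩ := hψ
  have hCφ0 : 0 < Cφ := one_pos.trans_le hCφ
  have hCψ0 : 0 < Cψ := one_pos.trans_le hCψ
  refine ⟨Cψ⁻¹ * (Cφ ^ (γ₁ / β₂))⁻¹, by positivity, fun s S hs hsS => ?_⟩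
  have hSs : 0 < S / s := div_pos (hs.trans_le hsS) hs
  have hφ : (φ S / φ s) ^ (γ₁ / β₂) ≤ Cφ ^ (γ₁ / β₂) * (S / s) ^ γ₁ :=
    calc (φ S / φ s) ^ (γ₁ / β₂) ≤ (Cφ * (S / s) ^ β₂) ^ (γ₁ / β₂) :=
          rpow_le_rpow (le_trans (by positivity) (hφb s S hs hsS).1) (hφb s S hs hsS).2
            (by positivity)
      _ = Cφ ^ (γ₁ / β₂) * (S / s) ^ γ₁ := by
          rw [mul_rpow hCφ0.le (by positivity), ← rpow_mul hSs.le, mul_div_cancel₀ _ hβ₂.ne']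
  calc Cψ⁻¹ * (Cφ ^ (γ₁ / β₂))⁻¹ * (φ S / φ s) ^ (γ₁ / β₂)
      ≤ Cψ⁻¹ * (Cφ ^ (γ₁ / β₂))⁻¹ * (Cφ ^ (γ₁ / β₂) * (S / s) ^ γ₁) := by gcongr
    _ = Cψ⁻¹ * (S / s) ^ γ₁ := by field_simp
    _ ≤ ψ S / ψ s := (hψb s S hs hsS).1

theorem stmt_17_general (β₁ β₂ γ₁ γ₂ a C₀ : ℝ) (hβ₁ : 0 < β₁) (hβ : β₁ ≤ β₂)
    (hγ₁ : 0 < γ₁) (ha1 : a < 1)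
    (φ ψ φinv : ℝ → ℝ) (hφ : LU β₁ β₂ φ) (hψ : LU γ₁ γ₂ ψ)
    (hinv₁ : ∀ r : ℝ, 0 ≤ r → φinv (φ r) = r)
    (hinv₂ : ∀ t : ℝ, 0 ≤ t → φ (φinv t) = t)
    (hgrowth : ∀ t T : ℝ, 0 < t → t ≤ T →
      ψ (φinv T) / ψ (φinv t) ≤ C₀ * (T / t) ^ a) :
    ∃ C : ℝ, 1 ≤ C ∧ ∀ r : ℝ, 0 < r →
      C⁻¹ / ψ r ≤
        (∫ t in Ioi (0 : ℝ), (1 - Real.exp (-(φ r)⁻¹ * t)) / (t * ψ (φinv t))) ∧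
      (∫ t in Ioi (0 : ℝ), (1 - Real.exp (-(φ r)⁻¹ * t)) / (t * ψ (φinv t))) ≤
        C / ψ r := by
  have hβ₂ : 0 < β₂ := hβ₁.trans_le hβ
  have hinv_pos : ∀ t, 0 < t → 0 < φinv t := fun t ht => hφ.invFun_pos hβ₁ hinv₁ hinv₂ ht
  have hinv_mono := hφ.monotoneOn_invFun hβ₁ hinv₁ hinv₂
  obtain ⟨c, hc, hlow⟩ := exists_mul_div_rpow_le_div hβ₂ hγ₁.le hφ hψ
  obtain ⟨C, hC, hcomp⟩ := exists_comparable_integral_one_sub_exp_div (g := fun t => ψ (φinv t))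
    (fun s hs t ht hst => hψ.2.1.monotoneOn (hinv_pos s hs).le (hinv_pos t ht).le
      (hinv_mono (Ioi_subset_Ici_self hs) (Ioi_subset_Ici_self ht) hst))
    (fun t ht => hψ.pos (hinv_pos t ht)) hgrowth ha1
    (fun t T ht htT => by
      simpa only [hinv₂ t ht.le, hinv₂ T (ht.le.trans htT)] using
        hlow _ _ (hinv_pos t ht) (hinv_mono ht.le (ht.le.trans htT) htT))
    hc (div_pos hγ₁ hβ₂)
  refine ⟨C, hC, fun r hr => ?_⟩
  simpa only [hinv₁ r hr.le] using hcomp (φ r) (hφ.pos hr)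

theorem stmt_17 (β₁ β₂ γ₁ γ₂ a C₀ : ℝ) (hβ₁ : 0 < β₁) (hβ : β₁ ≤ β₂)
    (hγ₁ : 0 < γ₁) (hγ : γ₁ ≤ γ₂) (ha : 0 < a) (ha1 : a < 1) (hC₀ : 0 < C₀)
    (φ ψ φinv : ℝ → ℝ) (hφ : LU β₁ β₂ φ) (hψ : LU γ₁ γ₂ ψ)
    (hinv₁ : ∀ r : ℝ, 0 ≤ r → φinv (φ r) = r)
    (hinv₂ : ∀ t : ℝ, 0 ≤ t → φ (φinv t) = t)
    (hgrowth : ∀ t T : ℝ, 0 < t → t ≤ T →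
      ψ (φinv T) / ψ (φinv t) ≤ C₀ * (T / t) ^ a) :
    ∃ C : ℝ, 1 ≤ C ∧ ∀ r : ℝ, 0 < r →
      C⁻¹ / ψ r ≤
        (∫ t in Ioi (0 : ℝ), (1 - Real.exp (-(φ r)⁻¹ * t)) / (t * ψ (φinv t))) ∧
      (∫ t in Ioi (0 : ℝ), (1 - Real.exp (-(φ r)⁻¹ * t)) / (t * ψ (φinv t))) ≤
        C / ψ r :=
  stmt_17_general β₁ β₂ γ₁ γ₂ a C₀ hβ₁ hβ hγ₁ ha1 φ ψ φinv hφ hψ hinv₁ hinv₂ hgrowth
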